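/- Let X be a reflexive real Banach space, C ⊆ X an open convex set, and f : C → ℝ a continuous convex function with f(x) > 0 for all x ∈ C. Then the function 1/f is d.c. on C, i.e., 1/f is representable as a difference of two continuous convex functions on C. -/

import Mathlib

/-!
The maximum `G` of `‖x‖`, `f x` and `(infDist x Cᶜ)⁻¹` is a continuous convex exhaustion of `C`
whose sublevel sets `{G ≤ n}` are closed, bounded and convex. In a reflexive space, nested
nonempty closed bounded convex sets meet (Banach–Alaoglu in the bidual plus Hahn–Banach), so `f`
attains its infimum on `{G ≤ n}` and is bounded below there by some `μ n > 0`. On a convex set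
where `f ≥ μ`, the function `f⁻¹ + μ⁻² f` is convex. With `K n := max_{j ≤ n} (μ j)⁻²`, the
supremum over `n` of `K n f + ∑_{j<n} (K (j+1) - K j) j (G - j)` is locally a finite maximum,
convex, and turns `f⁻¹` into a convex function when added to it.
-/

open Set Metric Bornology Filter NNReal

/-- `f` is a control function for `F` on the convex set `C`. -/
def IsControlOn {X Y : Type*} [NormedAddCommGroup X] [NormedSpace ℝ X]
    [NormedAddCommGroup Y] [NormedSpace ℝ Y]
    (C : Set X) (F : X → Y) (f : X → ℝ) : Prop :=
  ContinuousOn f C ∧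
    ∀ φ : Y →L[ℝ] ℝ, ‖φ‖ ≤ 1 → ConvexOn ℝ C (fun x => φ (F x) + f x)

/-- `F` is a d.c. (delta-convex) mapping on `C`. -/
def IsDCOn {X Y : Type*} [NormedAddCommGroup X] [NormedSpace ℝ X]
    [NormedAddCommGroup Y] [NormedSpace ℝ Y]
    (C : Set X) (F : X → Y) : Prop :=
  ContinuousOn F C ∧ ∃ f : X → ℝ, IsControlOn C F f

/-- `g` is a d.c. function on `C`: a difference of two continuous convex functions. -/
def IsDCFnOn {X : Type*} [NormedAddCommGroup X] [NormedSpace ℝ X]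
    (C : Set X) (g : X → ℝ) : Prop :=
  ∃ p q : X → ℝ, ContinuousOn p C ∧ ContinuousOn q C ∧
    ConvexOn ℝ C p ∧ ConvexOn ℝ C q ∧ ∀ x ∈ C, g x = p x - q x

/-- `A ⊂⊂ B`: some ε-enlargement of `A` is contained in `B`. -/
def SubSub {X : Type*} [NormedAddCommGroup X] (A B : Set X) : Prop :=
  ∃ ε > (0:ℝ), ∀ a ∈ A, ∀ y : X, ‖y‖ < ε → a + y ∈ B

/-- `N` is an equivalent norm on `Y` with modulus of convexity of power type 2. -/
def IsEquivNormPT2 {Y : Type*} [NormedAddCommGroup Y] [NormedSpace ℝ Y] (N : Y → ℝ) : Prop :=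
  (∀ u v : Y, N (u + v) ≤ N u + N v) ∧
  (∀ (a : ℝ) (u : Y), N (a • u) = |a| * N u) ∧
  (∃ c₁ c₂ : ℝ, 0 < c₁ ∧ 0 < c₂ ∧ ∀ u : Y, c₁ * ‖u‖ ≤ N u ∧ N u ≤ c₂ * ‖u‖) ∧
  (∃ a : ℝ, 0 < a ∧ ∀ ε : ℝ, ε ∈ Set.Ioc (0:ℝ) 2 → ∀ u v : Y,
    N u ≤ 1 → N v ≤ 1 → ε ≤ N (u - v) → a * ε ^ 2 ≤ 1 - N ((2⁻¹ : ℝ) • (u + v)))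

/-- `G` is `C^{1,1}` on `U`: Fréchet differentiable with Lipschitz derivative. -/
def IsC11On {X Y : Type*} [NormedAddCommGroup X] [NormedSpace ℝ X]
    [NormedAddCommGroup Y] [NormedSpace ℝ Y] (U : Set X) (G : X → Y) : Prop :=
  ∃ G' : X → X →L[ℝ] Y, (∀ x ∈ U, HasFDerivAt G (G' x) x) ∧
    ∃ L : NNReal, LipschitzOnWith L G' U

/-- `F` is locally d.c. on `C`: each point of `C` has a convex neighborhood `U`
with `F` d.c. on `U ∩ C`. -/
def LocallyDCOn {X Y : Type*} [NormedAddCommGroup X] [NormedSpace ℝ X]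
    [NormedAddCommGroup Y] [NormedSpace ℝ Y] (C : Set X) (F : X → Y) : Prop :=
  ∀ a ∈ C, ∃ U : Set X, U ∈ nhds a ∧ Convex ℝ U ∧ IsDCOn (U ∩ C) F


open scoped Topology

lemma inv_add_mul_le_add_mul_inv {u v a b : ℝ} (hu : 0 < u) (hv : 0 < v)
    (ha : 0 ≤ a) (hb : 0 ≤ b) (hab : a + b = 1) :
    (a * u + b * v)⁻¹ ≤ a * u⁻¹ + b * v⁻¹ := by
  simpa [zpow_neg_one, smul_eq_mul] using
    (convexOn_zpow (𝕜 := ℝ) (-1)).2 (mem_Ioi.2 hu) (mem_Ioi.2 hv) ha hb hab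

lemma inv_add_mul_le_of_le_add {u v a b Z K : ℝ} (hu : 0 < u) (hv : 0 < v) (hZ : 0 < Z)
    (ha : 0 ≤ a) (hb : 0 ≤ b) (hab : a + b = 1) (hZuv : Z ≤ a * u + b * v)
    (hK : Z⁻¹ ^ 2 ≤ K) :
    Z⁻¹ + K * Z ≤ a * (u⁻¹ + K * u) + b * (v⁻¹ + K * v) := by
  set m := a * u + b * v
  have hgap : Z⁻¹ - m⁻¹ ≤ K * (m - Z) := calc
    Z⁻¹ - m⁻¹ = (m - Z) / (m * Z) := by field_simp [(hZ.trans_le hZuv).ne']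
    _ ≤ (m - Z) / Z ^ 2 :=
      div_le_div_of_nonneg_left (sub_nonneg.2 hZuv) (by positivity) (by nlinarith)
    _ = Z⁻¹ ^ 2 * (m - Z) := by field_simp
    _ ≤ K * (m - Z) := by gcongr
  linear_combination hgap + inv_add_mul_le_add_mul_inv hu hv ha hb hab

lemma ConcaveOn.convexOn_inv {E : Type*} [AddCommMonoid E] [Module ℝ E] {s : Set E}
    {g : E → ℝ} (hg : ConcaveOn ℝ s g) (hpos : ∀ x ∈ s, 0 < g x) :
    ConvexOn ℝ s (fun x => (g x)⁻¹) := by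
  refine ⟨hg.1, fun x hx y hy a b ha hb hab => ?_⟩
  have hcombo : 0 < a * g x + b * g y := convex_Ioi (0 : ℝ) (hpos x hx) (hpos y hy) ha hb hab
  calc (g (a • x + b • y))⁻¹ ≤ (a * g x + b * g y)⁻¹ := inv_anti₀ hcombo (hg.2 hx hy ha hb hab)
    _ ≤ a * (g x)⁻¹ + b * (g y)⁻¹ := inv_add_mul_le_add_mul_inv (hpos x hx) (hpos y hy) ha hb hab

section InfDist

variable {X : Type*} [MetricSpace X] {C : Set X}

lemma infDist_compl_pos (hC : IsOpen C) (hne : Cᶜ.Nonempty) {x : X} (hx : x ∈ C) :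
    0 < infDist x Cᶜ :=
  (hC.isClosed_compl.notMem_iff_infDist_pos hne).1 (not_not.2 hx)

lemma continuousOn_inv_infDist_compl (hCopen : IsOpen C) :
    ContinuousOn (fun x => (infDist x Cᶜ)⁻¹) C := by
  rcases Cᶜ.eq_empty_or_nonempty with h | hne
  · simpa [h] using continuousOn_const
  exact (continuous_infDist_pt _).continuousOn.inv₀ fun x hx =>
    (infDist_compl_pos hCopen hne hx).ne'

/-- Sublevel sets of a function dominating `(infDist · Cᶜ)⁻¹` stay away from the boundary of
`C`, hence are closed in the whole space. -/
lemma isClosed_sep_le_of_inv_infDist_le (hCopen : IsOpen C) {G : X → ℝ}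
    (hG : ContinuousOn G C) (hGd : ∀ x ∈ C, (infDist x Cᶜ)⁻¹ ≤ G x) (r : ℝ) :
    IsClosed {x ∈ C | G x ≤ r} := by
  rcases Cᶜ.eq_empty_or_nonempty with h | hne
  · obtain rfl : C = univ := compl_empty_iff.1 h
    simpa using isClosed_le (continuousOn_univ.1 hG) continuous_const
  have hd := fun x (hx : x ∈ C) => infDist_compl_pos hCopen hne hx
  rcases le_or_gt r 0 with hr | hr
  · convert isClosed_empty
    refine eq_empty_of_forall_notMem fun x hx => ?_
    linarith [inv_pos.2 (hd x hx.1), hGd x hx.1, hx.2]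
  set E := {x | r⁻¹ ≤ infDist x Cᶜ}
  have hEC : E ⊆ C := fun x hx => by
    by_contra hxC
    have : r⁻¹ ≤ 0 := (infDist_zero_of_mem (show x ∈ Cᶜ from hxC)).symm ▸ hx
    linarith [inv_pos.2 hr]
  have hsep : {x ∈ C | G x ≤ r} = E ∩ G ⁻¹' Iic r := by
    ext x
    refine ⟨fun hx => ⟨?_, hx.2⟩, fun hx => ⟨hEC hx.1, hx.2⟩⟩
    exact (inv_le_comm₀ (hd x hx.1) hr).1 ((hGd x hx.1).trans hx.2)
  rw [hsep]
  exact (hG.mono hEC).preimage_isClosed_of_isClosed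
    (isClosed_le continuous_const (continuous_infDist_pt _)) isClosed_Iic

end InfDist

section ConvexInfDist

variable {X : Type*} [NormedAddCommGroup X] [NormedSpace ℝ X] {C : Set X}

lemma add_infDist_compl_smul_mem {x : X} (hx : x ∈ C) {t : X} (ht : ‖t‖ < 1) :
    x + infDist x Cᶜ • t ∈ C := by
  rcases (infDist_nonneg (x := x) (s := Cᶜ)).eq_or_lt with h | h
  · simpa [← h] using hx
  refine ball_infDist_compl_subset (x := x) (mem_ball_iff_norm.2 ?_)
  rw [add_sub_cancel_left, norm_smul, Real.norm_of_nonneg h.le]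
  exact mul_lt_of_lt_one_right h ht

/-- With `d := infDist · Cᶜ`: if `z = a x + b y`, then `z + (a d(x) + b d(y)) t` is the same
combination of `x + d(x) t` and `y + d(y) t`, which lie in `C` for `‖t‖ < 1`. -/
lemma concaveOn_infDist_compl (hC : Convex ℝ C) : ConcaveOn ℝ C (fun x => infDist x Cᶜ) := by
  refine ⟨hC, fun x hx y hy a b ha hb hab => ?_⟩
  rcases Cᶜ.eq_empty_or_nonempty with h | hne
  · simp [h]
  set R := a * infDist x Cᶜ + b * infDist y Cᶜ
  refine (le_infDist hne).2 fun w hw => not_lt.1 fun hlt => hw ?_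
  have hR : 0 < R := dist_nonneg.trans_lt hlt
  have ht : ‖R⁻¹ • (w - (a • x + b • y))‖ < 1 := by
    rw [norm_smul, Real.norm_of_nonneg (inv_nonneg.2 hR.le), ← dist_eq_norm', inv_mul_lt_one₀ hR]
    exact hlt
  have hcomb := hC (add_infDist_compl_smul_mem hx ht) (add_infDist_compl_smul_mem hy ht) ha hb hab
  convert hcomb using 1
  simp only [smul_add, smul_smul, ← add_assoc]
  rw [add_right_comm (a • x), add_assoc, ← add_smul, ← mul_assoc, ← mul_assoc,
    ← add_mul, mul_inv_cancel₀ hR.ne', one_smul]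
  abel

lemma convexOn_inv_infDist_compl (hCopen : IsOpen C) (hCconv : Convex ℝ C) :
    ConvexOn ℝ C (fun x => (infDist x Cᶜ)⁻¹) := by
  rcases Cᶜ.eq_empty_or_nonempty with h | hne
  · simpa [h] using convexOn_const (0 : ℝ) hCconv
  exact (concaveOn_infDist_compl hCconv).convexOn_inv fun x hx => infDist_compl_pos hCopen hne hx

end ConvexInfDist

section Reflexive

variable {X : Type*} [NormedAddCommGroup X] [NormedSpace ℝ X]

/-- The weak-star closures of the images in the bidual are nested weak-star compact sets
(Banach–Alaoglu); a point of their intersection comes from some `x : X` by reflexivity, and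
Hahn–Banach separation shows that `x` lies in every `S k`. -/
theorem nonempty_iInter_of_reflexive
    (hrefl : Function.Surjective (NormedSpace.inclusionInDoubleDual ℝ X)) {S : ℕ → Set X}
    (hanti : ∀ k, S (k + 1) ⊆ S k) (hne : ∀ k, (S k).Nonempty) (hconv : ∀ k, Convex ℝ (S k))
    (hclosed : ∀ k, IsClosed (S k)) (hbdd : IsBounded (S 0)) : (⋂ k, S k).Nonempty := by
  obtain ⟨R, hR⟩ := hbdd.subset_closedBall 0
  let J := NormedSpace.inclusionInDoubleDual ℝ X
  let T : ℕ → Set (WeakDual ℝ (StrongDual ℝ X)) :=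
    fun k => closure ((fun x => StrongDual.toWeakDual (J x)) '' S k)
  have hT_ball : ∀ k, T k ⊆ WeakDual.toStrongDual ⁻¹' closedBall 0 R := fun k =>
    closure_minimal (by
      rintro _ ⟨x, hx, rfl⟩
      have hx0 : ‖x‖ ≤ R := by simpa using hR (antitone_nat_of_succ_le hanti (Nat.zero_le k) hx)
      show dist (J x) 0 ≤ R
      calc dist (J x) 0 = ‖J x‖ := by exact dist_zero_right (J x)
        _ ≤ R := (NormedSpace.double_dual_bound ℝ X x).trans hx0)
      (WeakDual.isCompact_closedBall 0 R).isClosed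
  obtain ⟨F, hF⟩ := IsCompact.nonempty_iInter_of_sequence_nonempty_isCompact_isClosed T
    (fun k => closure_mono (image_mono (hanti k))) (fun k => ((hne k).image _).closure)
    ((WeakDual.isCompact_closedBall 0 R).of_isClosed_subset isClosed_closure (hT_ball 0))
    (fun k => isClosed_closure)
  obtain ⟨x, hx⟩ := hrefl (WeakDual.toStrongDual F)
  refine ⟨x, mem_iInter.2 fun k => ?_⟩
  by_contra hxk
  obtain ⟨φ, u, hφS, hφx⟩ := geometric_hahn_banach_closed_point (hconv k) (hclosed k) hxk
  have hFφ : F φ ≤ u := closure_minimal (t := {F' : WeakDual ℝ (StrongDual ℝ X) | F' φ ≤ u})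
    (by rintro _ ⟨y, hy, rfl⟩; exact (hφS y hy).le)
    (isClosed_le (WeakDual.eval_continuous φ) continuous_const) (mem_iInter.1 hF k)
  have hFx : F φ = φ x := by
    rw [← NormedSpace.dual_def ℝ X x φ, hx]
    rfl
  linarith

theorem exists_isMinOn_of_reflexive
    (hrefl : Function.Surjective (NormedSpace.inclusionInDoubleDual ℝ X)) {D : Set X}
    {f : X → ℝ} (hDne : D.Nonempty) (hDclosed : IsClosed D)
    (hDbdd : IsBounded D) (hfcont : ContinuousOn f D) (hfconv : ConvexOn ℝ D f)
    (hfbdd : BddBelow (f '' D)) : ∃ x ∈ D, IsMinOn f D x := by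
  set ι := sInf (f '' D)
  let S : ℕ → Set X := fun k => {x ∈ D | f x ≤ ι + 1 / (k + 1)}
  have hS_ne : ∀ k, (S k).Nonempty := fun k => by
    have hk : (0 : ℝ) < 1 / (k + 1) := by positivity
    obtain ⟨_, ⟨x, hxD, rfl⟩, hx⟩ :=
      exists_lt_of_csInf_lt (hDne.image f) (lt_add_of_pos_right ι hk)
    exact ⟨x, hxD, hx.le⟩
  have hS_anti : ∀ k, S (k + 1) ⊆ S k := fun k x hx => ⟨hx.1, hx.2.trans (by gcongr; simp)⟩
  obtain ⟨x, hx⟩ := nonempty_iInter_of_reflexive hrefl hS_anti hS_ne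
    (fun k => hfconv.convex_le _)
    (fun k => hfcont.preimage_isClosed_of_isClosed hDclosed isClosed_Iic)
    (hDbdd.subset (sep_subset _ _))
  have hxS := mem_iInter.1 hx
  have hfx : f x ≤ ι := le_of_forall_pos_le_add fun ε hε => by
    obtain ⟨k, hk⟩ := exists_nat_one_div_lt hε
    exact (hxS k).2.trans (by linarith)
  exact ⟨x, (hxS 0).1, fun z hz => hfx.trans (csInf_le hfbdd ⟨z, hz, rfl⟩)⟩

theorem exists_pos_forall_le_of_reflexive
    (hrefl : Function.Surjective (NormedSpace.inclusionInDoubleDual ℝ X)) {D : Set X}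
    {f : X → ℝ} (hDclosed : IsClosed D) (hDbdd : IsBounded D)
    (hfcont : ContinuousOn f D) (hfconv : ConvexOn ℝ D f) (hfpos : ∀ x ∈ D, 0 < f x) :
    ∃ μ > 0, ∀ x ∈ D, μ ≤ f x := by
  rcases D.eq_empty_or_nonempty with rfl | hDne
  · exact ⟨1, one_pos, by simp⟩
  obtain ⟨x, hxD, hmin⟩ := exists_isMinOn_of_reflexive hrefl hDne hDclosed hDbdd hfcont
    hfconv ⟨0, by rintro _ ⟨z, hz, rfl⟩; exact (hfpos z hz).le⟩
  exact ⟨f x, hfpos x hxD, hmin⟩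

end Reflexive

lemma le_max_of_le_succ_of_succ_le {α : Type*} [LinearOrder α] {a : ℕ → α} {N : ℕ}
    (hup : ∀ n < N, a n ≤ a (n + 1)) (hdown : ∀ n, N < n → a (n + 1) ≤ a n) (n : ℕ) :
    a n ≤ max (a N) (a (N + 1)) := by
  rcases le_or_gt n N with h | h
  · refine le_max_of_le_left ?_
    clear hdown
    induction N, h using Nat.le_induction with
    | base => exact le_rfl
    | succ m hnm ih => exact (ih fun k hk => hup k (by omega)).trans (hup m (by omega))
  · exact le_max_of_le_right (antitoneOn_nat_Ici_of_succ_le (fun k hk => hdown k hk)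
      (le_refl (N + 1)) (show N + 1 ≤ n from h) h)

section Correction

def stepSum {X : Type*} (K : ℕ → ℝ) (G : X → ℝ) (n : ℕ) (x : X) : ℝ :=
  ∑ j ∈ Finset.range n, (K (j + 1) - K j) * j * (G x - j)

/-- Consecutive differences are `(K (n+1) - K n) (f + n (G - n))`, which is `≥ 0` when `n < G`
and `≤ 0` when `f ≤ G ≤ n - 1`; so over `n` these functions peak at `⌈G⌉` or `⌈G⌉ + 1`. -/
def correction {X : Type*} (K : ℕ → ℝ) (f G : X → ℝ) (n : ℕ) (x : X) : ℝ :=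
  K n * f x + stepSum K G n x

noncomputable def correctionSup {X : Type*} (K : ℕ → ℝ) (f G : X → ℝ) (x : X) : ℝ :=
  max (correction K f G ⌈G x⌉₊ x) (correction K f G (⌈G x⌉₊ + 1) x)

variable {X : Type*} {K : ℕ → ℝ} {f G : X → ℝ}

lemma correction_succ_sub (n : ℕ) (x : X) :
    correction K f G (n + 1) x - correction K f G n x =
      (K (n + 1) - K n) * (f x + n * (G x - n)) := by
  simp only [correction, stepSum, Finset.sum_range_succ]
  ring

lemma correction_le_succ (hK : Monotone K) {n : ℕ} {x : X} (hf : 0 ≤ f x) (hn : (n : ℝ) < G x) :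
    correction K f G n x ≤ correction K f G (n + 1) x := by
  have hstep := correction_succ_sub (K := K) (f := f) (G := G) n x
  have : 0 ≤ (K (n + 1) - K n) * (f x + n * (G x - n)) :=
    mul_nonneg (sub_nonneg.2 (hK n.le_succ))
      (add_nonneg hf (mul_nonneg n.cast_nonneg (sub_pos.2 hn).le))
  linarith

lemma correction_succ_le (hK : Monotone K) {n : ℕ} {x : X} (hfG : f x ≤ G x)
    (hn : G x ≤ n - 1) : correction K f G (n + 1) x ≤ correction K f G n x := by
  have hstep := correction_succ_sub (K := K) (f := f) (G := G) n x
  have : (K (n + 1) - K n) * (f x + n * (G x - n)) ≤ 0 :=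
    mul_nonpos_of_nonneg_of_nonpos (sub_nonneg.2 (hK n.le_succ)) (by nlinarith)
  linarith

lemma correction_le_correctionSup (hK : Monotone K) {x : X} (hf : 0 ≤ f x) (hfG : f x ≤ G x)
    (n : ℕ) : correction K f G n x ≤ correctionSup K f G x := by
  refine le_max_of_le_succ_of_succ_le (a := fun n => correction K f G n x)
    (fun n hn => correction_le_succ hK hf (Nat.lt_ceil.1 hn))
    (fun n hn => correction_succ_le hK hfG ?_) n
  have : ((⌈G x⌉₊ + 1 : ℕ) : ℝ) ≤ n := by exact_mod_cast hn
  push_cast at this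
  linarith [Nat.le_ceil (G x)]

lemma exists_correction_eq_correctionSup (x : X) :
    ∃ n, ⌈G x⌉₊ ≤ n ∧ correction K f G n x = correctionSup K f G x := by
  rcases max_choice (correction K f G ⌈G x⌉₊ x) (correction K f G (⌈G x⌉₊ + 1) x) with h | h
  · exact ⟨_, le_rfl, h.symm⟩
  · exact ⟨_, Nat.le_succ _, h.symm⟩

section Convexity

variable [AddCommGroup X] [Module ℝ X] {C : Set X}

lemma convexOn_stepSum (hK : Monotone K) (hG : ConvexOn ℝ C G) (n : ℕ) :
    ConvexOn ℝ C (stepSum K G n) := by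
  have hsum : stepSum K G n = fun x => (∑ j ∈ Finset.range n, (K (j + 1) - K j) * j) • G x
      + -∑ j ∈ Finset.range n, (K (j + 1) - K j) * j * j := by
    funext x
    simp only [stepSum, smul_eq_mul, Finset.sum_mul, ← Finset.sum_neg_distrib,
      ← Finset.sum_add_distrib]
    exact Finset.sum_congr rfl fun j _ => by ring
  rw [hsum]
  exact (hG.smul (Finset.sum_nonneg fun j _ =>
    mul_nonneg (sub_nonneg.2 (hK j.le_succ)) j.cast_nonneg)).add_const _

lemma convexOn_correction (hK : Monotone K) (hK0 : 0 ≤ K 0) (hf : ConvexOn ℝ C f)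
    (hG : ConvexOn ℝ C G) (n : ℕ) : ConvexOn ℝ C (correction K f G n) :=
  (hf.smul (hK0.trans (hK n.zero_le))).add (convexOn_stepSum hK hG n)

lemma convexOn_correctionSup (hK : Monotone K) (hK0 : 0 ≤ K 0) (hf : ConvexOn ℝ C f)
    (hG : ConvexOn ℝ C G) (hf0 : ∀ x ∈ C, 0 ≤ f x) (hfG : ∀ x ∈ C, f x ≤ G x) :
    ConvexOn ℝ C (correctionSup K f G) := by
  refine ⟨hf.1, fun x hx y hy a b ha hb hab => ?_⟩
  obtain ⟨n, -, hn⟩ := exists_correction_eq_correctionSup (K := K) (f := f) (a • x + b • y)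
  rw [← hn]
  refine ((convexOn_correction hK hK0 hf hG n).2 hx hy ha hb hab).trans (add_le_add ?_ ?_)
  · exact smul_le_smul_of_nonneg_left (correction_le_correctionSup hK (hf0 x hx) (hfG x hx) n) ha
  · exact smul_le_smul_of_nonneg_left (correction_le_correctionSup hK (hf0 y hy) (hfG y hy) n) hb

/-- At `z = a x + b y` the supremum is attained at some `n ≥ ⌈G z⌉`, where `K n ≥ f(z)⁻²`;
there the concavity defect of `f⁻¹` is absorbed by the term `K n f` of `correction`. -/
lemma convexOn_inv_add_correctionSup (hK : Monotone K) (hf : ConvexOn ℝ C f)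
    (hG : ConvexOn ℝ C G) (hfpos : ∀ x ∈ C, 0 < f x) (hfG : ∀ x ∈ C, f x ≤ G x)
    (hKf : ∀ n : ℕ, ∀ z ∈ C, G z ≤ n → (f z)⁻¹ ^ 2 ≤ K n) :
    ConvexOn ℝ C (fun x => (f x)⁻¹ + correctionSup K f G x) := by
  refine ⟨hf.1, fun x hx y hy a b ha hb hab => ?_⟩
  set z := a • x + b • y
  have hz : z ∈ C := hf.1 hx hy ha hb hab
  obtain ⟨n, hNn, hn⟩ := exists_correction_eq_correctionSup (K := K) (f := f) z
  have hKn : (f z)⁻¹ ^ 2 ≤ K n := (hKf _ z hz (Nat.le_ceil _)).trans (hK hNn)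
  have hinv := inv_add_mul_le_of_le_add (hfpos x hx) (hfpos y hy) (hfpos z hz) ha hb hab
    (hf.2 hx hy ha hb hab) hKn
  have hsum := (convexOn_stepSum hK hG n).2 hx hy ha hb hab
  have hqx := mul_le_mul_of_nonneg_left
    (correction_le_correctionSup hK (hfpos x hx).le (hfG x hx) n) ha
  have hqy := mul_le_mul_of_nonneg_left
    (correction_le_correctionSup hK (hfpos y hy).le (hfG y hy) n) hb
  simp only [correction, smul_eq_mul] at hsum hqx hqy hn ⊢
  rw [← hn]
  linarith

end Convexity

section Continuity

variable [TopologicalSpace X] {C : Set X}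

lemma continuousOn_correction (hf : ContinuousOn f C) (hG : ContinuousOn G C) (n : ℕ) :
    ContinuousOn (correction K f G n) C := by
  unfold correction stepSum
  fun_prop

/-- Near a point `x₀`, `⌈G⌉ ≤ M := ⌈G x₀⌉ + 1`, so the supremum is a maximum of the first
`M + 2` functions. -/
lemma continuousOn_correctionSup (hC : IsOpen C) (hK : Monotone K) (hf : ContinuousOn f C)
    (hG : ContinuousOn G C) (hf0 : ∀ x ∈ C, 0 ≤ f x) (hfG : ∀ x ∈ C, f x ≤ G x) :
    ContinuousOn (correctionSup K f G) C := by
  intro x₀ hx₀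
  set M := ⌈G x₀⌉₊ + 1
  have hGM : ∀ᶠ x in 𝓝 x₀, x ∈ C ∧ G x < M :=
    (hC.eventually_mem hx₀).and <| (hG.continuousAt (hC.mem_nhds hx₀)).eventually_lt
      continuousAt_const (by push_cast [M]; linarith [Nat.le_ceil (G x₀)])
  have heq :
      (fun x => partialSups (correction K f G · x) (M + 1)) =ᶠ[𝓝 x₀] correctionSup K f G := by
    filter_upwards [hGM] with x ⟨hx, hxM⟩
    have hN : ⌈G x⌉₊ ≤ M := Nat.ceil_le.2 hxM.le
    refine le_antisymm (partialSups_le_iff.2 fun n _ =>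
      correction_le_correctionSup hK (hf0 x hx) (hfG x hx) n) (max_le ?_ ?_)
    · exact le_partialSups_of_le (correction K f G · x) (by omega)
    · exact le_partialSups_of_le (correction K f G · x) (by omega)
  exact ((ContinuousAt.partialSups_apply fun k _ =>
    (continuousOn_correction hf hG k).continuousAt (hC.mem_nhds hx₀)).congr heq).continuousWithinAt

end Continuity

end Correction

section DC

variable {X : Type*} [NormedAddCommGroup X] [NormedSpace ℝ X] {C : Set X} {f : X → ℝ}

theorem isDCFnOn_one_div_of_exhaustion (hCopen : IsOpen C) (hfcont : ContinuousOn f C)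
    (hfconv : ConvexOn ℝ C f) (hfpos : ∀ x ∈ C, 0 < f x) {G : X → ℝ} (hGcont : ContinuousOn G C)
    (hGconv : ConvexOn ℝ C G) (hfG : ∀ x ∈ C, f x ≤ G x)
    (hbound : ∀ n : ℕ, ∃ μ > 0, ∀ z ∈ C, G z ≤ n → μ ≤ f z) :
    IsDCFnOn C (fun x => 1 / f x) := by
  choose μ hμ hμf using hbound
  set K := partialSups fun n => (μ n)⁻¹ ^ 2
  have hK : Monotone K := (partialSups _).monotone
  have hK0 : 0 ≤ K 0 := by simp only [K, partialSups_zero]; positivity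
  have hKf : ∀ n : ℕ, ∀ z ∈ C, G z ≤ n → (f z)⁻¹ ^ 2 ≤ K n := fun n z hz hGz =>
    (pow_le_pow_left₀ (inv_nonneg.2 (hfpos z hz).le) (inv_anti₀ (hμ n) (hμf n z hz hGz)) 2).trans
      (le_partialSups (fun n => (μ n)⁻¹ ^ 2) n)
  have hf0 : ∀ x ∈ C, 0 ≤ f x := fun x hx => (hfpos x hx).le
  have hq := continuousOn_correctionSup hCopen hK hfcont hGcont hf0 hfG
  refine ⟨fun x => (f x)⁻¹ + correctionSup K f G x, correctionSup K f G,
    (hfcont.inv₀ fun x hx => (hfpos x hx).ne').add hq, hq,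
    convexOn_inv_add_correctionSup hK hfconv hGconv hfpos hfG hKf,
    convexOn_correctionSup hK hK0 hfconv hGconv hf0 hfG, fun x _ => by simp⟩

theorem exists_convex_exhaustion (hCopen : IsOpen C) (hCconv : Convex ℝ C)
    (hfcont : ContinuousOn f C) (hfconv : ConvexOn ℝ C f) :
    ∃ G : X → ℝ, ContinuousOn G C ∧ ConvexOn ℝ C G ∧ (∀ x ∈ C, f x ≤ G x) ∧
      ∀ r : ℝ, IsClosed {x ∈ C | G x ≤ r} ∧ IsBounded {x ∈ C | G x ≤ r} := by
  have hGcont : ContinuousOn (fun x => max (max ‖x‖ (f x)) (infDist x Cᶜ)⁻¹) C :=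
    (continuous_norm.continuousOn.sup hfcont).sup (continuousOn_inv_infDist_compl hCopen)
  refine ⟨_, hGcont,
    ((convexOn_norm hCconv).sup hfconv).sup (convexOn_inv_infDist_compl hCopen hCconv),
    fun x _ => (le_max_right _ _).trans (le_max_left _ _), fun r => ⟨?_, ?_⟩⟩
  · exact isClosed_sep_le_of_inv_infDist_le hCopen hGcont (fun x _ => le_max_right _ _) r
  · refine (isBounded_closedBall (x := (0 : X)) (r := r)).subset fun x hx => ?_
    rw [mem_closedBall, dist_zero_right]
    exact (le_max_left _ _).trans ((le_max_left _ _).trans hx.2)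

end DC

theorem dc_reciprocal_of_convex_reflexive_general {X : Type*}
    [NormedAddCommGroup X] [NormedSpace ℝ X]
    (hrefl : Function.Surjective (NormedSpace.inclusionInDoubleDual ℝ X))
    (C : Set X) (hCopen : IsOpen C) (hCconv : Convex ℝ C)
    (f : X → ℝ) (hfcont : ContinuousOn f C) (hfconv : ConvexOn ℝ C f)
    (hfpos : ∀ x ∈ C, 0 < f x) :
    IsDCFnOn C (fun x => 1 / f x) := by
  obtain ⟨G, hGcont, hGconv, hfG, hG⟩ := exists_convex_exhaustion hCopen hCconv hfcont hfconv
  refine isDCFnOn_one_div_of_exhaustion hCopen hfcont hfconv hfpos hGcont hGconv hfG fun n => ?_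
  obtain ⟨μ, hμ, hμf⟩ := exists_pos_forall_le_of_reflexive hrefl (hG n).1 (hG n).2
    (hfcont.mono (sep_subset _ _)) (hfconv.subset (sep_subset _ _) (hGconv.convex_le n))
    fun x hx => hfpos x hx.1
  exact ⟨μ, hμ, fun z hz hGz => hμf z ⟨hz, hGz⟩⟩

/-- In a reflexive Banach space, the reciprocal of a positive continuous
convex function on an open convex set is d.c. -/
theorem dc_reciprocal_of_convex_reflexive {X : Type*}
    [NormedAddCommGroup X] [NormedSpace ℝ X] [CompleteSpace X]
    (hrefl : Function.Surjective (NormedSpace.inclusionInDoubleDual ℝ X))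
    (C : Set X) (hCopen : IsOpen C) (hCconv : Convex ℝ C)
    (f : X → ℝ) (hfcont : ContinuousOn f C) (hfconv : ConvexOn ℝ C f)
    (hfpos : ∀ x ∈ C, 0 < f x) :
    IsDCFnOn C (fun x => 1 / f x) :=
  dc_reciprocal_of_convex_reflexive_general hrefl C hCopen hCconv f hfcont hfconv hfpos
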